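/- Let d ≥ 1, T > 0, L ≥ 0, M ≥ 0. Let F : ℝ^d × [0,T] → ℝ^d be continuous, continuously differentiable in the space variable, with |F(x,t)| ≤ M and |div_x F(x,t)| ≤ d L for all (x,t). Let ρ : ℝ^d × [0,T] → ℝ be smooth, and suppose there is a function g : ℝ^d → [0,∞) with both g and g² Lebesgue integrable such that |ρ(x,t)|, |∂ρ/∂t(x,t)|, |∂ρ/∂x_k(x,t)| (k = 1,…,d), and |∂²ρ/∂x_j∂x_k(x,t)| (j,k = 1,…,d) are all bounded by g(x) for every (x,t) ∈ ℝ^d × [0,T]. If ρ satisfies ∂ρ/∂t = (1/2)Δρ − div_x(ρ F) pointwise on ℝ^d × [0,T], then for every s ∈ [0,T], ∫_{ℝ^d} ρ(x,s)² dx ≤ e^{2dLs} ∫_{ℝ^d} ρ(x,0)² dx. -/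

import Mathlib

open MeasureTheory

open Set Filter Topology

lemma pi_integral_div_eq_zero {n : ℕ}
    (W : (Fin (n+1) → ℝ) → (Fin (n+1) → ℝ))
    (W' : (Fin (n+1) → ℝ) → ((Fin (n+1) → ℝ) →L[ℝ] (Fin (n+1) → ℝ)))
    (hW : ∀ x, HasFDerivAt W (W' x) x)
    (hWi : ∀ i, Integrable (fun x => W x i))
    (hdiv : Integrable (fun x => ∑ i, W' x (Pi.single i 1) i)) :
    (∫ x, ∑ i, W' x (Pi.single i 1) i) = 0 := by
  set D : (Fin (n+1) → ℝ) → ℝ := fun x => ∑ i, W' x (Pi.single i 1) i with hD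
  -- the box identity
  have box_id : ∀ r : ℝ, 0 ≤ r →
      (∫ x in Icc (fun _ => -r) (fun _ => r), D x) =
        ∑ i : Fin (n+1),
          ((∫ y in Icc ((fun _ => -r) ∘ Fin.succAbove i) ((fun _ => r) ∘ Fin.succAbove i),
              W (Fin.insertNth i r y) i) -
           ∫ y in Icc ((fun _ => -r) ∘ Fin.succAbove i) ((fun _ => r) ∘ Fin.succAbove i),
              W (Fin.insertNth i (-r) y) i) := by
    intro r hr
    have hle : (fun _ : Fin (n+1) => -r) ≤ fun _ => r := fun i => by simp [neg_le_self hr]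
    exact integral_divergence_of_hasFDerivAt_off_countable
      (fun _ => -r) (fun _ => r) hle W W' ∅ countable_empty
      (fun x _ => (hW x).continuousAt.continuousWithinAt)
      (fun x hx => hW x) hdiv.integrableOn
  -- Fubini along each coordinate
  have hprod : ∀ i : Fin (n+1),
      Integrable (fun p : ℝ × (Fin n → ℝ) => W (Fin.insertNth i p.1 p.2) i)
        ((volume : Measure ℝ).prod (volume : Measure (Fin n → ℝ))) := by
    intro i
    have hmp : MeasurePreserving ((MeasurableEquiv.piFinSuccAbove (fun _ : Fin (n+1) => ℝ) i).symm)
        (((volume : Measure ℝ)).prod (volume : Measure (Fin n → ℝ)))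
        (volume : Measure (Fin (n+1) → ℝ)) := by
      have := (volume_preserving_piFinSuccAbove (fun _ : Fin (n+1) => ℝ) i).symm
      exact this
    exact ((hmp.integrable_comp_emb
        (MeasurableEquiv.measurableEmbedding _)).2 (hWi i))
  set h : Fin (n+1) → ℝ → ℝ := fun i c => ∫ y, ‖W (Fin.insertNth i c y) i‖ with hh
  have hint : ∀ i, Integrable (h i) := fun i => (hprod i).integral_norm_prod_left
  have hslice : ∀ᵐ c : ℝ, ∀ i : Fin (n+1),
      Integrable (fun y => W (Fin.insertNth i c y) i) ∧
      Integrable (fun y => W (Fin.insertNth i (-c) y) i) := by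
    rw [MeasureTheory.ae_all_iff]
    intro i
    have h1 := (hprod i).prod_right_ae
    have h2 : ∀ᵐ c : ℝ, Integrable (fun y => W (Fin.insertNth i (-c) y) i) :=
      (Measure.measurePreserving_neg (volume : Measure ℝ)).quasiMeasurePreserving.ae h1
    exact h1.and h2
  set H : ℝ → ℝ := fun c => ∑ i, (h i c + h i (-c)) with hH
  have hHnn : ∀ c, 0 ≤ H c := by
    intro c
    refine Finset.sum_nonneg fun i _ => add_nonneg ?_ ?_ <;>
      exact integral_nonneg fun y => norm_nonneg _
  have hHint : Integrable H := by
    refine integrable_finset_sum _ fun i _ => (hint i).add ?_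
    have : Integrable ((h i) ∘ (fun c : ℝ => -c)) volume :=
      ((Measure.measurePreserving_neg (volume : Measure ℝ)).integrable_comp_emb
        (MeasurableEquiv.neg ℝ).measurableEmbedding).2 (hint i)
    exact this
  -- existence of good radii
  have good : ∀ ε > (0:ℝ), ∀ A : ℝ, ∃ r : ℝ, A < r ∧ 0 ≤ r ∧
      (∀ i : Fin (n+1), Integrable (fun y => W (Fin.insertNth i r y) i) ∧
        Integrable (fun y => W (Fin.insertNth i (-r) y) i)) ∧ H r < ε := by
    intro ε hε A
    by_contra hcon
    push_neg at hcon
    have hae : ∀ᵐ c : ℝ, c ∈ Ioi (max A 0) → ε ≤ H c := by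
      filter_upwards [hslice] with c hc hc'
      have h1 : A < c := lt_of_le_of_lt (le_max_left _ _) hc'
      have h2 : (0:ℝ) ≤ c := le_of_lt (lt_of_le_of_lt (le_max_right _ _) hc')
      exact hcon c h1 h2 hc
    have hsub : Ioi (max A 0) ≤ᵐ[volume] {c : ℝ | ε ≤ H c} := by
      filter_upwards [hae] with c hc
      intro hmem
      exact hc hmem
    have h1 : (volume (Ioi (max A 0))) ≤ volume {c : ℝ | ε ≤ H c} := measure_mono_ae hsub
    have h2 : volume {c : ℝ | ε ≤ H c} < ⊤ := hHint.measure_ge_lt_top hε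
    rw [Real.volume_Ioi] at h1
    exact (lt_irrefl _ (lt_of_le_of_lt h1 h2)).elim
  -- tail estimate
  have hDabs : Integrable (fun x => |D x|) := hdiv.abs
  have tendU : Tendsto (fun j : ℕ => ∫ x in Icc (fun _ : Fin (n+1) => -(j:ℝ)) (fun _ => (j:ℝ)), |D x|)
      atTop (𝓝 (∫ x, |D x|)) := by
    have hmono : Monotone (fun j : ℕ => Icc (fun _ : Fin (n+1) => -(j:ℝ)) (fun _ => (j:ℝ))) := by
      intro j k hjk
      apply Icc_subset_Icc
      · intro i; simp only; exact neg_le_neg (by exact_mod_cast hjk)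
      · intro i; simp only; exact_mod_cast hjk
    have hunion : (⋃ j : ℕ, Icc (fun _ : Fin (n+1) => -(j:ℝ)) (fun _ => (j:ℝ))) = univ := by
      ext x
      simp only [mem_iUnion, mem_univ, iff_true, mem_Icc]
      refine ⟨⌈‖x‖⌉₊, ?_, ?_⟩ <;> intro i
      · have := norm_le_pi_norm x i
        have h2 : ‖x‖ ≤ (⌈‖x‖⌉₊ : ℝ) := Nat.le_ceil _
        have := (abs_le.1 ((Real.norm_eq_abs (x i) ▸ this).trans h2)).1
        simpa using this
      · have := norm_le_pi_norm x i
        have h2 : ‖x‖ ≤ (⌈‖x‖⌉₊ : ℝ) := Nat.le_ceil _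
        exact (abs_le.1 ((Real.norm_eq_abs (x i) ▸ this).trans h2)).2
    have := tendsto_setIntegral_of_monotone (f := fun x => |D x|)
      (fun j : ℕ => measurableSet_Icc) hmono (by rw [hunion]; exact hDabs.integrableOn)
    rwa [hunion, setIntegral_univ] at this
  have tail : ∀ ε > (0:ℝ), ∃ A : ℝ, 0 ≤ A ∧ ∀ r : ℝ, A ≤ r →
      (∫ x in (Icc (fun _ : Fin (n+1) => -r) (fun _ => r))ᶜ, |D x|) < ε := by
    intro ε hε
    have : ∀ᶠ j : ℕ in atTop,
        (∫ x, |D x|) - ε < ∫ x in Icc (fun _ : Fin (n+1) => -(j:ℝ)) (fun _ => (j:ℝ)), |D x| :=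
      tendU.eventually (eventually_gt_nhds (by linarith))
    obtain ⟨j, hj⟩ := this.exists
    refine ⟨j, Nat.cast_nonneg _, fun r hr => ?_⟩
    have hsub : Icc (fun _ : Fin (n+1) => -(j:ℝ)) (fun _ => (j:ℝ)) ⊆
        Icc (fun _ : Fin (n+1) => -r) (fun _ => r) :=
      Icc_subset_Icc (fun i => neg_le_neg hr) (fun i => hr)
    have hmon : (∫ x in Icc (fun _ : Fin (n+1) => -(j:ℝ)) (fun _ => (j:ℝ)), |D x|) ≤
        ∫ x in Icc (fun _ : Fin (n+1) => -r) (fun _ => r), |D x| :=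
      setIntegral_mono_set hDabs.integrableOn
        (Eventually.of_forall fun x => abs_nonneg _) (HasSubset.Subset.eventuallyLE hsub)
    have hsplit : (∫ x in Icc (fun _ : Fin (n+1) => -r) (fun _ => r), |D x|) +
        (∫ x in (Icc (fun _ : Fin (n+1) => -r) (fun _ => r))ᶜ, |D x|) = ∫ x, |D x| :=
      integral_add_compl measurableSet_Icc hDabs
    linarith
  -- final bound
  have key : ∀ ε > (0:ℝ), |∫ x, D x| ≤ 2 * ε := by
    intro ε hε
    obtain ⟨A, hA0, hA⟩ := tail ε hε
    obtain ⟨r, hAr, hr0, hgood, hHr⟩ := good ε hε A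
    have hsplit : (∫ x in Icc (fun _ : Fin (n+1) => -r) (fun _ => r), D x) +
        (∫ x in (Icc (fun _ : Fin (n+1) => -r) (fun _ => r))ᶜ, D x) = ∫ x, D x :=
      integral_add_compl measurableSet_Icc hdiv
    have hcompl : |∫ x in (Icc (fun _ : Fin (n+1) => -r) (fun _ => r))ᶜ, D x| ≤
        ∫ x in (Icc (fun _ : Fin (n+1) => -r) (fun _ => r))ᶜ, |D x| := by
      simpa [Real.norm_eq_abs] using
        norm_integral_le_integral_norm (μ := volume.restrict (Icc (fun _ : Fin (n+1) => -r) (fun _ => r))ᶜ) D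
    have hbox : |∫ x in Icc (fun _ : Fin (n+1) => -r) (fun _ => r), D x| ≤ H r := by
      rw [box_id r hr0]
      refine (Finset.abs_sum_le_sum_abs _ _).trans ?_
      refine Finset.sum_le_sum fun i _ => ?_
      have key1 : ∀ c : ℝ, Integrable (fun y => W (Fin.insertNth i c y) i) volume →
          |∫ y in Icc ((fun _ : Fin (n+1) => -r) ∘ Fin.succAbove i) ((fun _ => r) ∘ Fin.succAbove i),
            W (Fin.insertNth i c y) i| ≤ h i c := by
        intro c hc
        calc |∫ y in Icc ((fun _ : Fin (n+1) => -r) ∘ Fin.succAbove i) ((fun _ => r) ∘ Fin.succAbove i),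
              W (Fin.insertNth i c y) i|
            ≤ ∫ y in Icc ((fun _ : Fin (n+1) => -r) ∘ Fin.succAbove i) ((fun _ => r) ∘ Fin.succAbove i),
              ‖W (Fin.insertNth i c y) i‖ := by
              simpa [Real.norm_eq_abs] using norm_integral_le_integral_norm
                (μ := volume.restrict (Icc ((fun _ : Fin (n+1) => -r) ∘ Fin.succAbove i)
                  ((fun _ => r) ∘ Fin.succAbove i))) (fun y => W (Fin.insertNth i c y) i)
          _ ≤ ∫ y, ‖W (Fin.insertNth i c y) i‖ :=
              setIntegral_le_integral hc.norm (Filter.Eventually.of_forall fun y => norm_nonneg _)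
          _ = h i c := rfl
      calc |(∫ y in Icc ((fun _ : Fin (n+1) => -r) ∘ Fin.succAbove i) ((fun _ => r) ∘ Fin.succAbove i),
              W (Fin.insertNth i r y) i) -
            ∫ y in Icc ((fun _ : Fin (n+1) => -r) ∘ Fin.succAbove i) ((fun _ => r) ∘ Fin.succAbove i),
              W (Fin.insertNth i (-r) y) i|
          ≤ |∫ y in Icc ((fun _ : Fin (n+1) => -r) ∘ Fin.succAbove i) ((fun _ => r) ∘ Fin.succAbove i),
              W (Fin.insertNth i r y) i| +
            |∫ y in Icc ((fun _ : Fin (n+1) => -r) ∘ Fin.succAbove i) ((fun _ => r) ∘ Fin.succAbove i),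
              W (Fin.insertNth i (-r) y) i| := abs_sub _ _
        _ ≤ h i r + h i (-r) := add_le_add (key1 r (hgood i).1) (key1 (-r) (hgood i).2)
    have htail := hA r (le_of_lt hAr)
    calc |∫ x, D x| = |(∫ x in Icc (fun _ : Fin (n+1) => -r) (fun _ => r), D x) +
          (∫ x in (Icc (fun _ : Fin (n+1) => -r) (fun _ => r))ᶜ, D x)| := by rw [hsplit]
      _ ≤ |∫ x in Icc (fun _ : Fin (n+1) => -r) (fun _ => r), D x| +
          |∫ x in (Icc (fun _ : Fin (n+1) => -r) (fun _ => r))ᶜ, D x| := abs_add_le _ _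
      _ ≤ H r + ε := add_le_add (hbox.trans le_rfl) (hcompl.trans (le_of_lt htail))
      _ ≤ 2 * ε := by linarith
  by_contra hne
  have hpos : 0 < |∫ x, D x| := abs_pos.2 hne
  have := key (|∫ x, D x| / 4) (by linarith)
  linarith

lemma euc_integral_div_eq_zero {d : ℕ} (hd : 1 ≤ d)
    (W : EuclideanSpace ℝ (Fin d) → EuclideanSpace ℝ (Fin d))
    (W' : EuclideanSpace ℝ (Fin d) → (EuclideanSpace ℝ (Fin d) →L[ℝ] EuclideanSpace ℝ (Fin d)))
    (hW : ∀ x, HasFDerivAt W (W' x) x)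
    (hWi : ∀ i, Integrable (fun x => W x i))
    (hdiv : Integrable (fun x => ∑ i, W' x (EuclideanSpace.single i 1) i)) :
    (∫ x, ∑ i, W' x (EuclideanSpace.single i 1) i) = 0 := by
  obtain ⟨n, rfl⟩ : ∃ n, d = n + 1 := ⟨d - 1, (Nat.succ_pred_eq_of_pos hd).symm⟩
  let φ : EuclideanSpace ℝ (Fin (n+1)) ≃L[ℝ] (Fin (n+1) → ℝ) := EuclideanSpace.equiv (Fin (n+1)) ℝ
  have mp : MeasurePreserving (MeasurableEquiv.toLp 2 (Fin (n+1) → ℝ))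
      (volume : Measure (Fin (n+1) → ℝ)) (volume : Measure (EuclideanSpace ℝ (Fin (n+1)))) :=
    (EuclideanSpace.volume_preserving_symm_measurableEquiv_toLp (Fin (n+1))).symm
  let V : (Fin (n+1) → ℝ) → (Fin (n+1) → ℝ) := fun y => φ (W (φ.symm y))
  let V' : (Fin (n+1) → ℝ) → ((Fin (n+1) → ℝ) →L[ℝ] (Fin (n+1) → ℝ)) := fun y =>
    ((φ : EuclideanSpace ℝ (Fin (n+1)) →L[ℝ] (Fin (n+1) → ℝ)).comp
      ((W' (φ.symm y)).comp (φ.symm : (Fin (n+1) → ℝ) →L[ℝ] EuclideanSpace ℝ (Fin (n+1)))))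
  have hV : ∀ y, HasFDerivAt V (V' y) y := by
    intro y
    have h1 : HasFDerivAt (fun y : Fin (n+1) → ℝ => (φ.symm y : EuclideanSpace ℝ (Fin (n+1))))
        (φ.symm : (Fin (n+1) → ℝ) →L[ℝ] EuclideanSpace ℝ (Fin (n+1))) y :=
      (φ.symm : (Fin (n+1) → ℝ) →L[ℝ] EuclideanSpace ℝ (Fin (n+1))).hasFDerivAt
    have h2 := (hW (φ.symm y)).comp y h1
    exact ((φ : EuclideanSpace ℝ (Fin (n+1)) →L[ℝ] (Fin (n+1) → ℝ)).hasFDerivAt.comp y h2)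
  have hVi : ∀ i, Integrable (fun y => V y i) :=
    fun i => (mp.integrable_comp_emb (MeasurableEquiv.measurableEmbedding _)).2 (hWi i)
  have hVdiv : Integrable (fun y => ∑ i, V' y (Pi.single i 1) i) :=
    (mp.integrable_comp_emb (MeasurableEquiv.measurableEmbedding _)).2 hdiv
  have h0 := pi_integral_div_eq_zero V V' hV hVi hVdiv
  rw [← h0]
  exact (mp.integral_comp (MeasurableEquiv.measurableEmbedding _)
    (fun x => ∑ i, W' x (EuclideanSpace.single i 1) i)).symm

lemma euc_coord_le_norm {d : ℕ} (v : EuclideanSpace ℝ (Fin d)) (k : Fin d) : |v k| ≤ ‖v‖ := by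
  rw [EuclideanSpace.norm_eq, ← Real.sqrt_sq_eq_abs]
  apply Real.sqrt_le_sqrt
  have := Finset.single_le_sum (f := fun i => ‖v i‖ ^ 2) (fun i _ => sq_nonneg _)
    (Finset.mem_univ k)
  simpa [Real.norm_eq_abs, sq_abs] using this

set_option maxHeartbeats 2000000

/-- Free-energy (L²) estimate for the mean-field equation
`∂ρ/∂t = (1/2)Δρ - div(ρF)`: if `|div_x F| ≤ dL`, then
`‖ρ(·,s)‖² ≤ e^{2dLs} ‖ρ(·,0)‖²` for `s ∈ [0,T]`. -/
theorem meanField_L2_energy_estimate (d : ℕ) (hd : 1 ≤ d)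
    (T : ℝ) (hT : 0 < T) (L M : ℝ) (hL : 0 ≤ L) (hM : 0 ≤ M)
    (F : EuclideanSpace ℝ (Fin d) → ℝ → EuclideanSpace ℝ (Fin d))
    (hFcont : ContinuousOn (fun p : EuclideanSpace ℝ (Fin d) × ℝ => F p.1 p.2)
      (Set.univ ×ˢ Set.Icc 0 T))
    (hFdiff : ∀ t ∈ Set.Icc (0 : ℝ) T, ContDiff ℝ 1 fun x => F x t)
    (hFbdd : ∀ x, ∀ t ∈ Set.Icc (0 : ℝ) T, ‖F x t‖ ≤ M)
    (hFdiv : ∀ x, ∀ t ∈ Set.Icc (0 : ℝ) T,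
      |∑ k, fderiv ℝ (fun y => F y t) x (EuclideanSpace.single k 1) k| ≤ d * L)
    (ρ : EuclideanSpace ℝ (Fin d) → ℝ → ℝ)
    (hρ : ContDiff ℝ (⊤ : ℕ∞) fun p : EuclideanSpace ℝ (Fin d) × ℝ => ρ p.1 p.2)
    (g : EuclideanSpace ℝ (Fin d) → ℝ) (hg0 : ∀ x, 0 ≤ g x)
    (hgint : Integrable g) (hg2int : Integrable fun x => g x ^ 2)
    (hdom : ∀ x, ∀ t ∈ Set.Icc (0 : ℝ) T,
      |ρ x t| ≤ g x ∧ |deriv (fun s => ρ x s) t| ≤ g x ∧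
      (∀ k, |fderiv ℝ (fun y => ρ y t) x (EuclideanSpace.single k 1)| ≤ g x) ∧
      (∀ j k, |fderiv ℝ (fun y => fderiv ℝ (fun z => ρ z t) y (EuclideanSpace.single k 1)) x
        (EuclideanSpace.single j 1)| ≤ g x))
    (hPDE : ∀ x, ∀ t ∈ Set.Icc (0 : ℝ) T,
      deriv (fun s => ρ x s) t
        = (1 / 2) * (∑ k, fderiv ℝ
              (fun y => fderiv ℝ (fun z => ρ z t) y (EuclideanSpace.single k 1)) x
              (EuclideanSpace.single k 1))
          - ∑ k, fderiv ℝ (fun y => ρ y t * F y t k) x (EuclideanSpace.single k 1)) :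
    ∀ s ∈ Set.Icc (0 : ℝ) T,
      (∫ x, ρ x s ^ 2) ≤ Real.exp (2 * d * L * s) * ∫ x, ρ x 0 ^ 2 := by
  intro s hs
  set K : ℝ := 2 * (d : ℝ) * L with hK
  have hdL0 : 0 ≤ (d : ℝ) * L := by positivity
  have hK0 : 0 ≤ K := by positivity
  set φf : ℝ → ℝ := fun t => ∫ x, ρ x t ^ 2 with hφf
  set Dt : ℝ → ℝ := fun t => ∫ x, 2 * ρ x t * deriv (fun τ => ρ x τ) t with hDtdef
  -- smoothness in each variable
  have hρt : ∀ t : ℝ, ContDiff ℝ (⊤ : ℕ∞) fun y : EuclideanSpace ℝ (Fin d) => ρ y t :=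
    fun t => hρ.comp (contDiff_id.prodMk contDiff_const)
  have hρs : ∀ x : EuclideanSpace ℝ (Fin d), ContDiff ℝ (⊤ : ℕ∞) fun τ : ℝ => ρ x τ :=
    fun x => hρ.comp (contDiff_const.prodMk contDiff_id)
  have hpk : ∀ (t : ℝ) (k : Fin d), ContDiff ℝ (⊤ : ℕ∞)
      fun y => fderiv ℝ (fun z => ρ z t) y (EuclideanSpace.single k 1) :=
    fun t k => ((hρt t).fderiv_right (by simp)).clm_apply contDiff_const
  -- continuity of the time derivative in x
  have hderiv_eq : ∀ (x : EuclideanSpace ℝ (Fin d)) (t : ℝ), deriv (fun τ => ρ x τ) t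
      = fderiv ℝ (fun p : EuclideanSpace ℝ (Fin d) × ℝ => ρ p.1 p.2) (x, t) (0, 1) := by
    intro x t
    have hfull : HasFDerivAt (fun p : EuclideanSpace ℝ (Fin d) × ℝ => ρ p.1 p.2)
        (fderiv ℝ (fun p : EuclideanSpace ℝ (Fin d) × ℝ => ρ p.1 p.2) (x, t)) (x, t) :=
      (hρ.differentiable (by simp) (x, t)).hasFDerivAt
    have hline : HasDerivAt (fun τ : ℝ => ((x, τ) : EuclideanSpace ℝ (Fin d) × ℝ))
        ((0 : EuclideanSpace ℝ (Fin d)), (1 : ℝ)) t :=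
      (hasDerivAt_const t x).prodMk (hasDerivAt_id t)
    exact (hfull.comp_hasDerivAt t hline).deriv
  have hcd : ∀ t : ℝ, Continuous fun x => deriv (fun τ => ρ x τ) t := by
    intro t
    have h1 : Continuous fun x : EuclideanSpace ℝ (Fin d) =>
        fderiv ℝ (fun p : EuclideanSpace ℝ (Fin d) × ℝ => ρ p.1 p.2) (x, t) :=
      (hρ.continuous_fderiv (by simp)).comp (continuous_id.prodMk continuous_const)
    have h2 : Continuous fun x : EuclideanSpace ℝ (Fin d) =>
        fderiv ℝ (fun p : EuclideanSpace ℝ (Fin d) × ℝ => ρ p.1 p.2) (x, t)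
          ((0 : EuclideanSpace ℝ (Fin d)), (1 : ℝ)) := h1.clm_apply continuous_const
    have heq : (fun x => deriv (fun τ => ρ x τ) t) = fun x : EuclideanSpace ℝ (Fin d) =>
        fderiv ℝ (fun p : EuclideanSpace ℝ (Fin d) × ℝ => ρ p.1 p.2) (x, t)
          ((0 : EuclideanSpace ℝ (Fin d)), (1 : ℝ)) := funext fun x => hderiv_eq x t
    rw [heq]; exact h2
  -- domination facts
  have hbρ : ∀ x, ∀ t ∈ Set.Icc (0:ℝ) T, |ρ x t| ≤ g x := fun x t ht => (hdom x t ht).1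
  have hbdt : ∀ x, ∀ t ∈ Set.Icc (0:ℝ) T, |deriv (fun τ => ρ x τ) t| ≤ g x :=
    fun x t ht => (hdom x t ht).2.1
  have hbpk : ∀ x, ∀ t ∈ Set.Icc (0:ℝ) T, ∀ k,
      |fderiv ℝ (fun z => ρ z t) x (EuclideanSpace.single k 1)| ≤ g x :=
    fun x t ht => (hdom x t ht).2.2.1
  have hg2c : ∀ c : ℝ, Integrable fun x => c * g x ^ 2 := fun c => hg2int.const_mul c
  have hint_of_bound : ∀ (f : EuclideanSpace ℝ (Fin d) → ℝ) (c : ℝ), Continuous f →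
      (∀ x, |f x| ≤ c * g x ^ 2) → Integrable f := by
    intro f c hc hb
    exact (hg2c c).mono' hc.aestronglyMeasurable
      (Filter.Eventually.of_forall fun x => by simpa [Real.norm_eq_abs] using hb x)
  -- integrability at fixed time
  have I1 : ∀ t ∈ Set.Icc (0:ℝ) T, Integrable fun x => ρ x t ^ 2 := by
    intro t ht
    refine hint_of_bound _ 1 ((hρt t).continuous.pow 2) fun x => ?_
    rw [abs_of_nonneg (sq_nonneg _), one_mul]
    calc ρ x t ^ 2 = |ρ x t| ^ 2 := (sq_abs _).symm
      _ ≤ g x ^ 2 := pow_le_pow_left₀ (abs_nonneg _) (hbρ x t ht) 2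
  have I2 : ∀ t ∈ Set.Icc (0:ℝ) T,
      Integrable fun x => 2 * ρ x t * deriv (fun τ => ρ x τ) t := by
    intro t ht
    refine hint_of_bound _ 2 ((continuous_const.mul (hρt t).continuous).mul (hcd t)) fun x => ?_
    have h1 := hbρ x t ht
    have h2 := hbdt x t ht
    rw [abs_mul, abs_mul, abs_two]
    nlinarith [abs_nonneg (ρ x t), abs_nonneg (deriv (fun τ => ρ x τ) t), hg0 x]
  have I3 : ∀ t ∈ Set.Icc (0:ℝ) T, Integrable fun x =>
      ∑ k, fderiv ℝ (fun z => ρ z t) x (EuclideanSpace.single k 1) ^ 2 := by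
    intro t ht
    refine integrable_finset_sum _ fun k _ => ?_
    refine hint_of_bound _ 1 ((hpk t k).continuous.pow 2) fun x => ?_
    rw [abs_of_nonneg (sq_nonneg _), one_mul]
    calc fderiv ℝ (fun z => ρ z t) x (EuclideanSpace.single k 1) ^ 2
        = |fderiv ℝ (fun z => ρ z t) x (EuclideanSpace.single k 1)| ^ 2 := (sq_abs _).symm
      _ ≤ g x ^ 2 := pow_le_pow_left₀ (abs_nonneg _) (hbpk x t ht k) 2
  have hcdivF : ∀ t ∈ Set.Icc (0:ℝ) T, Continuous fun x =>
      ∑ k, fderiv ℝ (fun y => F y t) x (EuclideanSpace.single k 1) k := by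
    intro t ht
    refine continuous_finset_sum _ fun k _ => ?_
    have h1 : Continuous fun x => fderiv ℝ (fun y => F y t) x :=
      (hFdiff t ht).continuous_fderiv (by simp)
    have h2 : Continuous fun x => fderiv ℝ (fun y => F y t) x (EuclideanSpace.single k 1) :=
      h1.clm_apply continuous_const
    exact (EuclideanSpace.proj (𝕜 := ℝ) k).continuous.comp h2
  have I4 : ∀ t ∈ Set.Icc (0:ℝ) T, Integrable fun x =>
      ρ x t ^ 2 * ∑ k, fderiv ℝ (fun y => F y t) x (EuclideanSpace.single k 1) k := by
    intro t ht
    refine hint_of_bound _ ((d : ℝ) * L) (((hρt t).continuous.pow 2).mul (hcdivF t ht))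
      fun x => ?_
    have h1 := hFdiv x t ht
    have h2 := hbρ x t ht
    rw [abs_mul, abs_of_nonneg (sq_nonneg _)]
    have h3 : ρ x t ^ 2 ≤ g x ^ 2 := by
      calc ρ x t ^ 2 = |ρ x t| ^ 2 := (sq_abs _).symm
        _ ≤ g x ^ 2 := pow_le_pow_left₀ (abs_nonneg _) h2 2
    nlinarith [sq_nonneg (ρ x t), abs_nonneg (∑ k, fderiv ℝ (fun y => F y t) x
      (EuclideanSpace.single k 1) k), hg0 x, sq_nonneg (g x)]
  
  have hcFk : ∀ t ∈ Set.Icc (0:ℝ) T, ∀ k, Continuous fun y => F y t k := by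
    intro t ht k
    exact (EuclideanSpace.proj (𝕜 := ℝ) k).continuous.comp (hFdiff t ht).continuous
  have hbFk : ∀ x, ∀ t ∈ Set.Icc (0:ℝ) T, ∀ k, |F x t k| ≤ M :=
    fun x t ht k => (euc_coord_le_norm (F x t) k).trans (hFbdd x t ht)
  have I5 : ∀ t ∈ Set.Icc (0:ℝ) T, ∀ k, Integrable fun y =>
      ρ y t * fderiv ℝ (fun z => ρ z t) y (EuclideanSpace.single k 1)
        - ρ y t * (ρ y t * F y t k) := by
    intro t ht k
    refine hint_of_bound _ (1 + M)
      (((hρt t).continuous.mul (hpk t k).continuous).sub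
        ((hρt t).continuous.mul ((hρt t).continuous.mul (hcFk t ht k)))) fun x => ?_
    have h1 := hbρ x t ht
    have h2 := hbpk x t ht k
    have h3 := hbFk x t ht k
    have h4 : |ρ x t * fderiv ℝ (fun z => ρ z t) x (EuclideanSpace.single k 1)| ≤ g x * g x := by
      rw [abs_mul]
      exact mul_le_mul h1 h2 (abs_nonneg _) (hg0 x)
    have h5 : |ρ x t * (ρ x t * F x t k)| ≤ g x * (g x * M) := by
      rw [abs_mul, abs_mul]
      refine mul_le_mul h1 (mul_le_mul h1 h3 (abs_nonneg _) (hg0 x))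
        (mul_nonneg (abs_nonneg _) (abs_nonneg _)) (hg0 x)
    calc |ρ x t * fderiv ℝ (fun z => ρ z t) x (EuclideanSpace.single k 1)
          - ρ x t * (ρ x t * F x t k)|
        ≤ |ρ x t * fderiv ℝ (fun z => ρ z t) x (EuclideanSpace.single k 1)|
          + |ρ x t * (ρ x t * F x t k)| := abs_sub _ _
      _ ≤ g x * g x + g x * (g x * M) := add_le_add h4 h5
      _ = (1 + M) * g x ^ 2 := by ring
  -- pointwise identity
  have hptw : ∀ t ∈ Set.Icc (0:ℝ) T, ∀ x,
      2 * ρ x t * deriv (fun τ => ρ x τ) t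
      = (∑ k, fderiv ℝ (fun y => ρ y t * fderiv ℝ (fun z => ρ z t) y (EuclideanSpace.single k 1)
            - ρ y t * (ρ y t * F y t k)) x (EuclideanSpace.single k 1))
        - (∑ k, fderiv ℝ (fun z => ρ z t) x (EuclideanSpace.single k 1) ^ 2)
        - ρ x t ^ 2 * ∑ k, fderiv ℝ (fun y => F y t) x (EuclideanSpace.single k 1) k := by
    intro t ht x
    have dρ : ∀ y, DifferentiableAt ℝ (fun z => ρ z t) y :=
      fun y => ((hρt t).differentiable (by simp)) y
    have dpk : ∀ (k : Fin d) (y), DifferentiableAt ℝ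
        (fun z => fderiv ℝ (fun z' => ρ z' t) z (EuclideanSpace.single k 1)) y :=
      fun k y => ((hpk t k).differentiable (by simp)) y
    have dF : DifferentiableAt ℝ (fun y => F y t) x := ((hFdiff t ht).differentiable (by simp)) x
    have dFk : ∀ k, DifferentiableAt ℝ (fun y => F y t k) x :=
      fun k => (EuclideanSpace.proj (𝕜 := ℝ) k).differentiableAt.comp x dF
    have dU : ∀ k, DifferentiableAt ℝ (fun y => ρ y t * F y t k) x :=
      fun k => (dρ x).mul (dFk k)
    have hcompF : ∀ k, fderiv ℝ (fun y => F y t k) x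
        = (EuclideanSpace.proj (𝕜 := ℝ) k).comp (fderiv ℝ (fun y => F y t) x) := by
      intro k
      have := fderiv_comp x (EuclideanSpace.proj (𝕜 := ℝ) k).differentiableAt dF
      exact ((EuclideanSpace.proj (𝕜 := ℝ) k).hasFDerivAt.comp x dF.hasFDerivAt).fderiv
    have Eu : ∀ k, fderiv ℝ (fun y => ρ y t * F y t k) x (EuclideanSpace.single k 1)
        = ρ x t * fderiv ℝ (fun y => F y t) x (EuclideanSpace.single k 1) k
          + F x t k * fderiv ℝ (fun z => ρ z t) x (EuclideanSpace.single k 1) := by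
      intro k
      rw [fderiv_fun_mul (dρ x) (dFk k)]
      simp only [ContinuousLinearMap.add_apply, ContinuousLinearMap.smul_apply, smul_eq_mul]
      rw [hcompF k]
      rfl
    have Ew : ∀ k, fderiv ℝ
        (fun y => ρ y t * fderiv ℝ (fun z => ρ z t) y (EuclideanSpace.single k 1)
          - ρ y t * (ρ y t * F y t k)) x (EuclideanSpace.single k 1)
        = (ρ x t * fderiv ℝ (fun y => fderiv ℝ (fun z => ρ z t) y (EuclideanSpace.single k 1)) x
              (EuclideanSpace.single k 1)
           + fderiv ℝ (fun z => ρ z t) x (EuclideanSpace.single k 1) ^ 2)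
          - (ρ x t * (ρ x t * fderiv ℝ (fun y => F y t) x (EuclideanSpace.single k 1) k
                + F x t k * fderiv ℝ (fun z => ρ z t) x (EuclideanSpace.single k 1))
             + ρ x t * (F x t k * fderiv ℝ (fun z => ρ z t) x (EuclideanSpace.single k 1))) := by
      intro k
      rw [fderiv_fun_sub ((dρ x).fun_mul (dpk k x)) ((dρ x).fun_mul (dU k))]
      rw [fderiv_fun_mul (dρ x) (dpk k x), fderiv_fun_mul (dρ x) (dU k)]
      simp only [ContinuousLinearMap.sub_apply, ContinuousLinearMap.add_apply,
        ContinuousLinearMap.smul_apply, smul_eq_mul]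
      rw [Eu k]
      ring
    have hPDEx := hPDE x t ht
    rw [show (fun τ => ρ x τ) = fun s => ρ x s from rfl, hPDEx]
    rw [Finset.sum_congr rfl fun k _ => Ew k]
    rw [Finset.sum_sub_distrib, Finset.sum_add_distrib, Finset.sum_add_distrib,
      ← Finset.mul_sum, ← Finset.mul_sum, ← Finset.mul_sum]
    have hS1 : (∑ k, (ρ x t * fderiv ℝ (fun y => F y t) x (EuclideanSpace.single k 1) k
        + F x t k * fderiv ℝ (fun z => ρ z t) x (EuclideanSpace.single k 1)))
        = ρ x t * (∑ k, fderiv ℝ (fun y => F y t) x (EuclideanSpace.single k 1) k)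
          + ∑ k, F x t k * fderiv ℝ (fun z => ρ z t) x (EuclideanSpace.single k 1) := by
      rw [Finset.sum_add_distrib, ← Finset.mul_sum]
    have hS2 : (∑ k, fderiv ℝ (fun y => ρ y t * F y t k) x (EuclideanSpace.single k 1))
        = ρ x t * (∑ k, fderiv ℝ (fun y => F y t) x (EuclideanSpace.single k 1) k)
          + ∑ k, F x t k * fderiv ℝ (fun z => ρ z t) x (EuclideanSpace.single k 1) := by
      rw [Finset.sum_congr rfl fun k _ => Eu k]
      rw [Finset.sum_add_distrib, ← Finset.mul_sum]
    rw [hS1, hS2]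
    ring
  
  -- integrability of the divergence
  have I6 : ∀ t ∈ Set.Icc (0:ℝ) T, Integrable fun x =>
      ∑ k, fderiv ℝ (fun y => ρ y t * fderiv ℝ (fun z => ρ z t) y (EuclideanSpace.single k 1)
        - ρ y t * (ρ y t * F y t k)) x (EuclideanSpace.single k 1) := by
    intro t ht
    have heq : (fun x => ∑ k, fderiv ℝ
        (fun y => ρ y t * fderiv ℝ (fun z => ρ z t) y (EuclideanSpace.single k 1)
          - ρ y t * (ρ y t * F y t k)) x (EuclideanSpace.single k 1))
        = fun x => (2 * ρ x t * deriv (fun τ => ρ x τ) t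
            + ∑ k, fderiv ℝ (fun z => ρ z t) x (EuclideanSpace.single k 1) ^ 2)
          + ρ x t ^ 2 * ∑ k, fderiv ℝ (fun y => F y t) x (EuclideanSpace.single k 1) k := by
      funext x
      have := hptw t ht x
      linarith
    rw [heq]
    exact ((I2 t ht).add (I3 t ht)).add (I4 t ht)
  -- vanishing of the divergence integral
  have hdiv0 : ∀ t ∈ Set.Icc (0:ℝ) T, (∫ x, ∑ k, fderiv ℝ
      (fun y => ρ y t * fderiv ℝ (fun z => ρ z t) y (EuclideanSpace.single k 1)
        - ρ y t * (ρ y t * F y t k)) x (EuclideanSpace.single k 1)) = 0 := by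
    intro t ht
    set w : Fin d → EuclideanSpace ℝ (Fin d) → ℝ := fun k y =>
      ρ y t * fderiv ℝ (fun z => ρ z t) y (EuclideanSpace.single k 1)
        - ρ y t * (ρ y t * F y t k) with hw
    have hwd : ∀ (k : Fin d) (x), DifferentiableAt ℝ (w k) x := by
      intro k x
      have dρ : DifferentiableAt ℝ (fun z => ρ z t) x := ((hρt t).differentiable (by simp)) x
      have dpk : DifferentiableAt ℝ
          (fun z => fderiv ℝ (fun z' => ρ z' t) z (EuclideanSpace.single k 1)) x :=
        ((hpk t k).differentiable (by simp)) x
      have dF : DifferentiableAt ℝ (fun y => F y t) x := ((hFdiff t ht).differentiable (by simp)) x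
      have dFk : DifferentiableAt ℝ (fun y => F y t k) x :=
        (EuclideanSpace.proj (𝕜 := ℝ) k).differentiableAt.comp x dF
      exact (dρ.mul dpk).sub (dρ.mul (dρ.mul dFk))
    set Wf : EuclideanSpace ℝ (Fin d) → EuclideanSpace ℝ (Fin d) := fun x =>
      (EuclideanSpace.equiv (Fin d) ℝ).symm (fun k => w k x) with hWf
    set Wf' : EuclideanSpace ℝ (Fin d) → (EuclideanSpace ℝ (Fin d) →L[ℝ] EuclideanSpace ℝ (Fin d)) :=
      fun x => (((EuclideanSpace.equiv (Fin d) ℝ).symm : (Fin d → ℝ) →L[ℝ] EuclideanSpace ℝ (Fin d)).comp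
        (ContinuousLinearMap.pi fun k => fderiv ℝ (w k) x)) with hWf'
    have hWfd : ∀ x, HasFDerivAt Wf (Wf' x) x := by
      intro x
      have hp : HasFDerivAt (fun x => (fun k => w k x))
          (ContinuousLinearMap.pi fun k => fderiv ℝ (w k) x) x :=
        hasFDerivAt_pi.2 fun k => (hwd k x).hasFDerivAt
      exact ((EuclideanSpace.equiv (Fin d) ℝ).symm :
        (Fin d → ℝ) →L[ℝ] EuclideanSpace ℝ (Fin d)).hasFDerivAt.comp x hp
    have hWi : ∀ i, Integrable fun x => Wf x i := fun i => I5 t ht i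
    have hdivI : Integrable fun x => ∑ i, Wf' x (EuclideanSpace.single i 1) i := I6 t ht
    exact euc_integral_div_eq_zero hd Wf Wf' hWfd hWi hdivI
  -- the key differential inequality
  have keyDt : ∀ t ∈ Set.Icc (0:ℝ) T, Dt t ≤ K * φf t := by
    intro t ht
    have heq : (fun x => ∑ k, fderiv ℝ
        (fun y => ρ y t * fderiv ℝ (fun z => ρ z t) y (EuclideanSpace.single k 1)
          - ρ y t * (ρ y t * F y t k)) x (EuclideanSpace.single k 1))
        = fun x => (2 * ρ x t * deriv (fun τ => ρ x τ) t
            + ∑ k, fderiv ℝ (fun z => ρ z t) x (EuclideanSpace.single k 1) ^ 2)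
          + ρ x t ^ 2 * ∑ k, fderiv ℝ (fun y => F y t) x (EuclideanSpace.single k 1) k := by
      funext x
      have := hptw t ht x
      linarith
    have h0 := hdiv0 t ht
    rw [heq] at h0
    have hI23 : Integrable (fun x => 2 * ρ x t * deriv (fun τ => ρ x τ) t
        + ∑ k, fderiv ℝ (fun z => ρ z t) x (EuclideanSpace.single k 1) ^ 2) :=
      (I2 t ht).add (I3 t ht)
    rw [integral_add hI23 (I4 t ht)] at h0
    rw [integral_add (I2 t ht) (I3 t ht)] at h0
    have h5 : 0 ≤ ∫ x, ∑ k, fderiv ℝ (fun z => ρ z t) x (EuclideanSpace.single k 1) ^ 2 :=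
      integral_nonneg fun x => Finset.sum_nonneg fun k _ => sq_nonneg _
    have h6 : -(∫ x, ρ x t ^ 2 * ∑ k, fderiv ℝ (fun y => F y t) x (EuclideanSpace.single k 1) k)
        ≤ ∫ x, (d : ℝ) * L * ρ x t ^ 2 := by
      rw [← integral_neg]
      refine integral_mono (I4 t ht).neg (((I1 t ht).const_mul _)) fun x => ?_
      have h7 := (abs_le.1 (hFdiv x t ht)).1
      nlinarith [sq_nonneg (ρ x t)]
    have h9 : (∫ x, (d : ℝ) * L * ρ x t ^ 2) = (d : ℝ) * L * φf t := integral_const_mul _ _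
    have hφnn : 0 ≤ φf t := integral_nonneg fun x => sq_nonneg _
    have hDteq : Dt t = -(∫ x, ∑ k, fderiv ℝ (fun z => ρ z t) x (EuclideanSpace.single k 1) ^ 2)
        - ∫ x, ρ x t ^ 2 * ∑ k, fderiv ℝ (fun y => F y t) x (EuclideanSpace.single k 1) k := by
      rw [hDtdef]
      linarith
    have hKφ : (d : ℝ) * L * φf t ≤ K * φf t := by
      rw [hK]
      nlinarith
    rw [hDteq]
    rw [h9] at h6
    linarith
  
  -- derivative of φf at interior points
  have hφderiv : ∀ t ∈ Set.Ioo (0:ℝ) T, HasDerivAt φf (Dt t) t := by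
    intro t ht
    have hε : 0 < min t (T - t) := lt_min ht.1 (sub_pos.2 ht.2)
    have hball : Metric.ball t (min t (T - t)) ⊆ Set.Icc (0:ℝ) T := by
      intro τ hτ
      rw [Real.ball_eq_Ioo] at hτ
      have h1 := min_le_left t (T - t)
      have h2 := min_le_right t (T - t)
      exact ⟨by linarith [hτ.1], by linarith [hτ.2]⟩
    have key := hasDerivAt_integral_of_dominated_loc_of_deriv_le (Metric.ball_mem_nhds t hε)
      (F := fun τ x => ρ x τ ^ 2) (F' := fun τ x => 2 * ρ x τ * deriv (fun τ' => ρ x τ') τ)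
      (bound := fun x => 2 * g x ^ 2) (μ := volume) (x₀ := t)
      (Filter.Eventually.of_forall fun τ => ((hρt τ).continuous.pow 2).aestronglyMeasurable)
      (I1 t (Set.Ioo_subset_Icc_self ht))
      (((continuous_const.mul (hρt t).continuous).mul (hcd t)).aestronglyMeasurable)
      (Filter.Eventually.of_forall fun x => ?_) (hg2c 2)
      (Filter.Eventually.of_forall fun x => ?_)
    · exact key.2
    · intro τ hτ
      have hτ' := hball hτ
      have h1 := hbρ x τ hτ'
      have h2 := hbdt x τ hτ'
      rw [Real.norm_eq_abs, abs_mul, abs_mul, abs_two]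
      show 2 * |ρ x τ| * |deriv (fun τ' => ρ x τ') τ| ≤ 2 * g x ^ 2
      nlinarith [abs_nonneg (ρ x τ), abs_nonneg (deriv (fun τ' => ρ x τ') τ), hg0 x]
    · intro τ hτ
      have hd1 : HasDerivAt (fun τ' => ρ x τ') (deriv (fun τ' => ρ x τ') τ) τ :=
        (((hρs x).differentiable (by simp)) τ).hasDerivAt
      have := hd1.fun_pow 2
      simpa [mul_comm, mul_assoc] using this
  -- continuity of φf on [0, T]
  have hφcont : ContinuousOn φf (Set.Icc 0 T) := by
    intro t₀ ht₀
    apply MeasureTheory.continuousWithinAt_of_dominated (bound := fun x => g x ^ 2)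
    · exact Filter.Eventually.of_forall fun τ => ((hρt τ).continuous.pow 2).aestronglyMeasurable
    · filter_upwards [self_mem_nhdsWithin] with τ hτ
      refine Filter.Eventually.of_forall fun x => ?_
      rw [Real.norm_eq_abs, abs_of_nonneg (sq_nonneg _)]
      calc ρ x τ ^ 2 = |ρ x τ| ^ 2 := (sq_abs _).symm
        _ ≤ g x ^ 2 := pow_le_pow_left₀ (abs_nonneg _) (hbρ x τ hτ) 2
    · exact hg2int
    · exact Filter.Eventually.of_forall fun x =>
        ((hρs x).continuous.pow 2).continuousAt.continuousWithinAt
  -- Grönwall on [a, s'] for 0 < a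
  have claim1 : ∀ a s', 0 < a → a ≤ s' → s' ≤ T → φf s' ≤ φf a * Real.exp (K * (s' - a)) := by
    intro a s' ha has' hs'T
    have ha0 : (0:ℝ) ≤ a := ha.le
    have h := le_gronwallBound_of_liminf_deriv_right_le (f := φf) (f' := Dt)
      (δ := φf a) (K := K) (ε := 0) (a := a) (b := s')
      (hφcont.mono (Set.Icc_subset_Icc ha0 hs'T))
      ?_ le_rfl ?_ s' ⟨has', le_rfl⟩
    · rwa [gronwallBound_ε0] at h
    · intro x hx r hr
      have hx' : x ∈ Set.Ioo (0:ℝ) T := ⟨lt_of_lt_of_le ha hx.1, lt_of_lt_of_le hx.2 hs'T⟩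
      have hder := (hφderiv x hx').hasDerivWithinAt (s := Set.Ioi x)
      rw [hasDerivWithinAt_iff_tendsto_slope] at hder
      rw [Set.diff_singleton_eq_self (fun hc => lt_irrefl x (Set.mem_Ioi.1 hc))] at hder
      have hev : ∀ᶠ z in nhdsWithin x (Set.Ioi x), (z - x)⁻¹ * (φf z - φf x) < r := by
        filter_upwards [hder.eventually_lt_const hr] with z hz
        rw [slope_def_field] at hz
        rw [div_eq_inv_mul] at hz
        exact hz
      exact hev.frequently
    · intro x hx
      have hx' : x ∈ Set.Icc (0:ℝ) T :=
        ⟨le_of_lt (lt_of_lt_of_le ha hx.1), le_of_lt (lt_of_lt_of_le hx.2 hs'T)⟩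
      have := keyDt x hx'
      linarith
  -- conclude
  rcases eq_or_lt_of_le hs.1 with h0 | h0
  · rw [← h0]
    simp [Real.exp_zero]
  · have htend1 : Filter.Tendsto φf (nhdsWithin 0 (Set.Ioi 0)) (nhds (φf 0)) := by
      have h1 := hφcont 0 ⟨le_rfl, hT.le⟩
      have h2 : nhdsWithin (0:ℝ) (Set.Ioc 0 T) ≤ nhdsWithin (0:ℝ) (Set.Icc 0 T) :=
        nhdsWithin_mono _ Set.Ioc_subset_Icc_self
      have h3 : nhdsWithin (0:ℝ) (Set.Ioc 0 T) = nhdsWithin (0:ℝ) (Set.Ioi 0) :=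
        nhdsWithin_Ioc_eq_nhdsGT hT
      exact Filter.Tendsto.mono_left h1 (h3 ▸ h2)
    have htend2 : Filter.Tendsto (fun a : ℝ => Real.exp (K * (s - a)))
        (nhdsWithin 0 (Set.Ioi 0)) (nhds (Real.exp (K * s))) := by
      have hc : ContinuousAt (fun a : ℝ => Real.exp (K * (s - a))) 0 := by fun_prop
      have h4 : Filter.Tendsto (fun a : ℝ => Real.exp (K * (s - a)))
          (nhdsWithin 0 (Set.Ioi 0)) (nhds (Real.exp (K * (s - 0)))) :=
        hc.continuousWithinAt (s := Set.Ioi (0:ℝ))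
      simpa using h4
    have htend := htend1.mul htend2
    have hev : ∀ᶠ a in nhdsWithin (0:ℝ) (Set.Ioi 0), φf s ≤ φf a * Real.exp (K * (s - a)) := by
      filter_upwards [Ioc_mem_nhdsGT_of_mem ⟨le_rfl, h0⟩] with a ha
      exact claim1 a s ha.1 ha.2 hs.2
    have hfinal := ge_of_tendsto htend hev
    calc (∫ x, ρ x s ^ 2) = φf s := rfl
      _ ≤ φf 0 * Real.exp (K * (s - 0)) := by simpa using hfinal
      _ = Real.exp (K * s) * ∫ x, ρ x 0 ^ 2 := by rw [sub_zero, mul_comm]
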